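/- arXiv:2006.06625 — 3 statements merged into one kernel-verified Lean document; each statement's English description precedes it below -/
import Mathlib

section
/- The Donsker–Varadhan formula: D_KL(p‖q) = sup over bounded measurable φ of { E_p[φ] − log E_q[exp(φ)] }. -/
/-!
The inequality `≤` is Gibbs' inequality for `p` against the tilted measure `q.tilted φ`, whose
log-likelihood ratio is `llr p q - φ + log E_q[exp φ]`. For `≥`, the supremum is approached by
`φₙ = log gₙ`, where `gₙ` is the density `dp/dq` clamped to `[e⁻ⁿ, eⁿ]`: then `E_p[φₙ] → D_KL(p‖q)`
and `E_q[gₙ] → E_q[dp/dq] = 1` by dominated convergence. Clamping from below, rather than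
truncating `log (dp/dq)` (which is `0` where the density vanishes), makes `exp φₙ → 0` on
`{dp/dq = 0}`, a `p`-null set that may carry `q`-mass.
-/

open MeasureTheory Filter Topology Real InformationTheory

noncomputable def clampExp (n : ℕ) (t : ℝ) : ℝ := max (exp (-n)) (min (exp n) t)

lemma exp_neg_le_clampExp (n : ℕ) (t : ℝ) : exp (-n) ≤ clampExp n t := le_max_left _ _

lemma clampExp_pos (n : ℕ) (t : ℝ) : 0 < clampExp n t :=
  (exp_pos _).trans_le (exp_neg_le_clampExp n t)

lemma clampExp_le_exp (n : ℕ) (t : ℝ) : clampExp n t ≤ exp n :=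
  max_le (exp_le_exp.2 (by linarith [n.cast_nonneg (α := ℝ)])) (min_le_left _ _)

lemma continuous_clampExp (n : ℕ) : Continuous (clampExp n) := by
  unfold clampExp; fun_prop

lemma abs_log_clampExp_le (n : ℕ) (t : ℝ) : |log (clampExp n t)| ≤ n := by
  have hlow := log_le_log (exp_pos _) (exp_neg_le_clampExp n t)
  have hup := log_le_log (clampExp_pos n t) (clampExp_le_exp n t)
  rw [log_exp] at hlow hup
  exact abs_le.2 ⟨hlow, hup⟩

lemma log_clampExp_of_pos {n : ℕ} {t : ℝ} (ht : 0 < t) :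
    log (clampExp n t) = max (-(n : ℝ)) (min (n : ℝ) (log t)) := by
  rw [clampExp, ← exp_log ht, ← exp_monotone.map_min, ← exp_monotone.map_max, log_exp, log_exp]

lemma abs_log_clampExp_le_abs_log {n : ℕ} {t : ℝ} (ht : 0 < t) :
    |log (clampExp n t)| ≤ |log t| := by
  have := n.cast_nonneg (α := ℝ)
  rw [log_clampExp_of_pos ht, abs_le]
  constructor <;> cases abs_cases (log t) <;> grind

lemma clampExp_le_one_add {n : ℕ} {t : ℝ} (ht : 0 ≤ t) : clampExp n t ≤ 1 + t :=
  max_le (by linarith [exp_le_one_iff.2 (neg_nonpos.2 (n.cast_nonneg (α := ℝ)))])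
    ((min_le_right _ _).trans (by linarith))

lemma tendsto_clampExp {t : ℝ} (ht : 0 ≤ t) : Tendsto (clampExp · t) atTop (𝓝 t) := by
  have hlow : Tendsto (fun n : ℕ ↦ exp (-n)) atTop (𝓝 0) :=
    tendsto_exp_atBot.comp (tendsto_neg_atTop_atBot.comp tendsto_natCast_atTop_atTop)
  have hup : ∀ᶠ n : ℕ in atTop, min (exp n) t = t :=
    ((tendsto_exp_atTop.comp tendsto_natCast_atTop_atTop).eventually_ge_atTop t).mono
      fun n hn ↦ min_eq_right hn
  simpa [clampExp, ht] using hlow.max (tendsto_const_nhds.congr' (hup.mono fun n hn ↦ hn.symm))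

namespace MeasureTheory

variable {α : Type*} {mα : MeasurableSpace α} {μ ν : Measure α}

lemma integral_sub_log_integral_exp_le_integral_llr [IsProbabilityMeasure μ]
    [IsProbabilityMeasure ν] (hμν : μ ≪ ν) (h_int : Integrable (llr μ ν) μ) {f : α → ℝ}
    (hfμ : Integrable f μ) (hfν : Integrable (fun x ↦ exp (f x)) ν) :
    ∫ x, f x ∂μ - log (∫ x, exp (f x) ∂ν) ≤ ∫ x, llr μ ν x ∂μ := by
  have := isProbabilityMeasure_tilted hfν
  have gibbs := integral_llr_add_sub_measure_univ_nonneg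
    (hμν.trans (absolutelyContinuous_tilted hfν)) (integrable_llr_tilted_right hμν hfμ h_int hfν)
  rw [integral_llr_tilted_right hμν hfμ hfν h_int] at gibbs
  simp only [probReal_univ] at gibbs
  linarith

lemma measurable_clampExp_rnDeriv (μ ν : Measure α) (n : ℕ) :
    Measurable fun x ↦ clampExp n (μ.rnDeriv ν x).toReal :=
  (continuous_clampExp n).measurable.comp (Measure.measurable_rnDeriv μ ν).ennreal_toReal

lemma tendsto_integral_log_clampExp_rnDeriv [SigmaFinite μ] [SigmaFinite ν] (hμν : μ ≪ ν)
    (h_int : Integrable (llr μ ν) μ) :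
    Tendsto (fun n ↦ ∫ x, log (clampExp n (μ.rnDeriv ν x).toReal) ∂μ) atTop
      (𝓝 (∫ x, llr μ ν x ∂μ)) := by
  have hpos : ∀ᵐ x ∂μ, 0 < (μ.rnDeriv ν x).toReal := by
    filter_upwards [Measure.rnDeriv_pos hμν, hμν.ae_le (Measure.rnDeriv_lt_top μ ν)]
      with x hx_pos hx_lt_top
    exact ENNReal.toReal_pos hx_pos.ne' hx_lt_top.ne
  exact tendsto_integral_of_dominated_convergence (fun x ↦ |llr μ ν x|)
    (fun n ↦ (measurable_clampExp_rnDeriv μ ν n).log.aestronglyMeasurable) h_int.abs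
    (fun n ↦ hpos.mono fun x hx ↦ abs_log_clampExp_le_abs_log hx)
    (hpos.mono fun x hx ↦ (continuousAt_log hx.ne').tendsto.comp (tendsto_clampExp hx.le))

lemma tendsto_integral_clampExp_rnDeriv [IsFiniteMeasure μ] [IsFiniteMeasure ν] (hμν : μ ≪ ν) :
    Tendsto (fun n ↦ ∫ x, clampExp n (μ.rnDeriv ν x).toReal ∂ν) atTop
      (𝓝 (μ.real Set.univ)) := by
  rw [← Measure.integral_toReal_rnDeriv hμν]
  refine tendsto_integral_of_dominated_convergence (fun x ↦ 1 + (μ.rnDeriv ν x).toReal)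
    (fun n ↦ (measurable_clampExp_rnDeriv μ ν n).aestronglyMeasurable)
    ((integrable_const 1).add Measure.integrable_toReal_rnDeriv)
    (fun n ↦ ae_of_all _ fun x ↦ ?_) (ae_of_all _ fun x ↦ tendsto_clampExp ENNReal.toReal_nonneg)
  rw [Real.norm_of_nonneg (clampExp_pos n _).le]
  exact clampExp_le_one_add ENNReal.toReal_nonneg

end MeasureTheory

/-- Donsker–Varadhan variational formula for the Kullback–Leibler divergence:
`D_KL(p‖q) = sup_{φ bounded measurable} { E_p[φ] − log E_q[exp φ] }`. -/
theorem donsker_varadhan {Ω : Type*} [MeasurableSpace Ω] (p q : Measure Ω)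
    [IsProbabilityMeasure p] [IsProbabilityMeasure q] (hpq : p ≪ q)
    (hKL : Integrable (fun x => Real.log ((p.rnDeriv q x).toReal)) p) :
    ∫ x, Real.log ((p.rnDeriv q x).toReal) ∂p =
      ⨆ φ : {φ : Ω → ℝ // Measurable φ ∧ ∃ M, ∀ x, |φ x| ≤ M},
        (∫ x, φ.1 x ∂p - Real.log (∫ x, Real.exp (φ.1 x) ∂q)) := by
  have gibbs (φ : {φ : Ω → ℝ // Measurable φ ∧ ∃ M, ∀ x, |φ x| ≤ M}) :
      ∫ x, φ.1 x ∂p - log (∫ x, exp (φ.1 x) ∂q) ≤ ∫ x, llr p q x ∂p := by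
    obtain ⟨φ, hφ, M, hM⟩ := φ
    refine integral_sub_log_integral_exp_le_integral_llr hpq hKL
      (.of_bound hφ.aestronglyMeasurable M (ae_of_all _ hM))
      (.of_bound hφ.exp.aestronglyMeasurable (exp M) (ae_of_all _ fun x ↦ ?_))
    rw [norm_of_nonneg (exp_pos _).le]
    exact exp_le_exp.2 ((le_abs_self _).trans (hM x))
  let φ (n : ℕ) : {φ : Ω → ℝ // Measurable φ ∧ ∃ M, ∀ x, |φ x| ≤ M} :=
    ⟨fun x ↦ log (clampExp n (p.rnDeriv q x).toReal),
      (measurable_clampExp_rnDeriv p q n).log, n, fun x ↦ abs_log_clampExp_le n _⟩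
  have : Nonempty {φ : Ω → ℝ // Measurable φ ∧ ∃ M, ∀ x, |φ x| ≤ M} := ⟨φ 0⟩
  refine le_antisymm ?_ (ciSup_le gibbs)
  have hexp := tendsto_integral_clampExp_rnDeriv hpq
  rw [probReal_univ] at hexp
  have hlim := (tendsto_integral_log_clampExp_rnDeriv hpq hKL).sub
    ((continuousAt_log one_ne_zero).tendsto.comp hexp)
  rw [log_one, sub_zero] at hlim
  refine le_of_tendsto' hlim fun n ↦ ?_
  simpa [φ, exp_log (clampExp_pos _ _)] using le_ciSup ⟨_, Set.forall_mem_range.2 gibbs⟩ (φ n)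
end

section
/- For any bounded measurable φ and probability measures p, q, E_p[φ] − log E_q[exp(φ)] ≤ D_KL(p‖q). -/
open MeasureTheory

/-- For any bounded measurable `φ`, `E_p[φ] − log E_q[exp φ] ≤ D_KL(p‖q)`. -/
theorem donsker_varadhan_le {Ω : Type*} [MeasurableSpace Ω] (p q : Measure Ω)
    [IsProbabilityMeasure p] [IsProbabilityMeasure q] (hpq : p ≪ q)
    (hKL : Integrable (fun x => Real.log ((p.rnDeriv q x).toReal)) p)
    (φ : Ω → ℝ) (hφ : Measurable φ) (M : ℝ) (hbound : ∀ x, |φ x| ≤ M) :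
    ∫ x, φ x ∂p - Real.log (∫ x, Real.exp (φ x) ∂q) ≤
      ∫ x, Real.log ((p.rnDeriv q x).toReal) ∂p := by
  set f : Ω → ℝ := fun x => (p.rnDeriv q x).toReal with hf
  set c : ℝ := ∫ x, Real.exp (φ x) ∂q with hc
  have hexp_meas : Measurable fun x => Real.exp (φ x) := Real.measurable_exp.comp hφ
  have hq_int : Integrable (fun x => Real.exp (φ x)) q := by
    refine (integrable_const (Real.exp M)).mono' hexp_meas.aestronglyMeasurable ?_
    filter_upwards with x
    rw [Real.norm_eq_abs, abs_of_pos (Real.exp_pos _)]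
    exact Real.exp_le_exp.mpr ((abs_le.mp (hbound x)).2)
  have hφ_int : Integrable φ p := by
    refine (integrable_const M).mono' hφ.aestronglyMeasurable ?_
    filter_upwards with x using hbound x
  have hc_pos : 0 < c := by
    have h1 : Real.exp (-M) ≤ c := by
      calc Real.exp (-M) = ∫ _, Real.exp (-M) ∂q := by simp
      _ ≤ c := by
        refine integral_mono (integrable_const _) hq_int fun x => ?_
        exact Real.exp_le_exp.mpr (neg_le_of_abs_le (hbound x))
    linarith [Real.exp_pos (-M)]
  -- positivity and finiteness of f, p-a.e.
  have hf_pos : ∀ᵐ x ∂p, 0 < f x := by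
    filter_upwards [Measure.rnDeriv_pos hpq, hpq.ae_le (Measure.rnDeriv_lt_top p q)]
      with x h1 h2
    exact ENNReal.toReal_pos h1.ne' h2.ne
  set g : Ω → ℝ := fun x => Real.exp (φ x) / f x with hg
  have hf_meas : Measurable f := (Measure.measurable_rnDeriv p q).ennreal_toReal
  have hg_meas : Measurable g := hexp_meas.div hf_meas
  -- f • g integrable w.r.t. q
  have hpt : ∀ x, f x • g x ≤ Real.exp (φ x) := by
    intro x
    rcases eq_or_ne (f x) 0 with h0 | h0
    · simp [h0, (Real.exp_pos (φ x)).le]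
    · have : f x • g x = Real.exp (φ x) := by
        simp only [hg, smul_eq_mul]; field_simp
      rw [this]
  have hfg_int : Integrable (fun x => f x • g x) q := by
    refine (integrable_const (Real.exp M)).mono' (hf_meas.smul hg_meas).aestronglyMeasurable ?_
    filter_upwards with x
    rw [Real.norm_eq_abs]
    rcases eq_or_ne (f x) 0 with h0 | h0
    · simp [h0, (Real.exp_pos M).le]
    · have : f x • g x = Real.exp (φ x) := by
        simp only [hg, smul_eq_mul]
        field_simp
      rw [this, abs_of_pos (Real.exp_pos _)]
      exact Real.exp_le_exp.mpr ((abs_le.mp (hbound x)).2)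
  have hg_int : Integrable g p := (integrable_rnDeriv_smul_iff hpq).mp hfg_int
  have hgint_le : ∫ x, g x ∂p ≤ c := by
    rw [← integral_rnDeriv_smul hpq (f := g)]
    exact integral_mono hfg_int hq_int fun x => hpt x
  -- pointwise inequality
  have hae : ∀ᵐ x ∂p, φ x - Real.log (f x) ≤ g x / c - 1 + Real.log c := by
    filter_upwards [hf_pos] with x hx
    have hy : 0 < Real.exp (φ x) / (f x * c) := by positivity
    have h1 := Real.log_le_sub_one_of_pos hy
    rw [Real.log_div (Real.exp_pos _).ne' (by positivity),
      Real.log_exp, Real.log_mul hx.ne' hc_pos.ne'] at h1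
    have : Real.exp (φ x) / (f x * c) = g x / c := by
      simp only [hg]; field_simp
    rw [this] at h1
    linarith
  have hmono := integral_mono_ae (hφ_int.sub hKL)
    (((hg_int.div_const c).sub (integrable_const 1)).add (integrable_const (Real.log c))) hae
  simp only [Pi.add_apply, Pi.sub_apply] at hmono
  have hR : ∫ x, (g x / c - 1 + Real.log c) ∂p
      = (∫ x, g x ∂p) / c - 1 + Real.log c := by
    rw [integral_add ((by exact (hg_int.div_const c).sub (integrable_const 1) :
        Integrable (fun x => g x / c - 1) p)) (integrable_const _),
      integral_sub ((by exact hg_int.div_const c : Integrable (fun x => g x / c) p))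
        (integrable_const 1), integral_div, integral_const, integral_const]
    simp
  rw [hR, integral_sub hφ_int hKL] at hmono
  have hdiv : (∫ x, g x ∂p) / c ≤ 1 := (div_le_one hc_pos).mpr hgint_le
  linarith
end

section
/- Limit of rescaled Rényi divergence: if the density ratio dp/dq is essentially bounded, lim_{α→∞} α R_α(p‖q) = log (esssup_q dp/dq), where R_α(p‖q) = (1/(α(α−1))) log E_q[(dp/dq)^α]. -/
/-! With `f = dp/dq` and `M = esssup_q f`, Markov's inequality and the bound `f ≤ M` give
`r ^ α * q {r ≤ f} ≤ ∫ f ^ α ∂q ≤ M ^ α` for `0 < r < M`, where `q {r ≤ f} > 0`. After taking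
logarithms and dividing by `α - 1` (note `α R_α = log (∫ f ^ α ∂q) / (α - 1)`), the two bounds
tend to `log r` and `log M`. -/

open MeasureTheory Filter Topology

lemma tendsto_mul_add_div_sub_one (a c : ℝ) :
    Tendsto (fun α : ℝ => (α * a + c) / (α - 1)) atTop (𝓝 a) := by
  have hsub : Tendsto (fun α : ℝ => α - 1) atTop atTop :=
    tendsto_atTop_add_const_right _ _ tendsto_id
  have h : Tendsto (fun α : ℝ => a + (a + c) / (α - 1)) atTop (𝓝 (a + 0)) :=
    tendsto_const_nhds.add (tendsto_const_nhds.div_atTop hsub)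
  rw [add_zero] at h
  refine h.congr' ?_
  filter_upwards [eventually_gt_atTop 1] with α hα
  have : α - 1 ≠ 0 := sub_ne_zero.2 hα.ne'
  field_simp
  ring

namespace MeasureTheory

variable {Ω : Type*} [MeasurableSpace Ω] {μ : Measure Ω} {f : Ω → ℝ} {r M α : ℝ}

lemma measureReal_le_pos_of_lt_essSup [IsFiniteMeasure μ] [NeZero μ] (hf : 0 ≤ f)
    (hr : r < essSup f μ) : 0 < μ.real {x | r ≤ f x} := by
  refine ENNReal.toReal_pos (fun h => ?_) (measure_ne_top μ _)
  have hlt : μ {x | r < f x} = 0 := measure_mono_null (fun x (hx : r < f x) => hx.le) h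
  have hle : f ≤ᵐ[μ] fun _ => r := by
    rw [EventuallyLE, ae_iff]
    simpa only [not_le] using hlt
  exact hr.not_ge (essSup_le_of_ae_le r hle (isCoboundedUnder_le_of_le _ hf))

lemma integrable_rpow_of_ae_le [IsFiniteMeasure μ] (hfm : AEMeasurable f μ) (hf : 0 ≤ f)
    (hfM : ∀ᵐ x ∂μ, f x ≤ M) (hα : 0 ≤ α) : Integrable (fun x => f x ^ α) μ :=
  Integrable.of_bound (hfm.pow_const α).aestronglyMeasurable (M ^ α) <|
    hfM.mono fun x hx => by
      rw [Real.norm_of_nonneg (Real.rpow_nonneg (hf x) α)]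
      exact Real.rpow_le_rpow (hf x) hx hα

lemma rpow_mul_measureReal_le_integral_rpow (hf : 0 ≤ f)
    (hint : Integrable (fun x => f x ^ α) μ) (hr : 0 ≤ r) (hα : 0 < α) :
    r ^ α * μ.real {x | r ≤ f x} ≤ ∫ x, f x ^ α ∂μ := by
  have hset : {x | r ≤ f x} = {x | r ^ α ≤ f x ^ α} := by
    ext x
    exact (Real.rpow_le_rpow_iff hr (hf x) hα).symm
  rw [hset]
  exact mul_meas_ge_le_integral_of_nonneg (.of_forall fun x => Real.rpow_nonneg (hf x) α) hint _

lemma integral_rpow_le_rpow_mul_measureReal_univ [IsFiniteMeasure μ] (hf : 0 ≤ f)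
    (hfM : ∀ᵐ x ∂μ, f x ≤ M) (hα : 0 ≤ α) : ∫ x, f x ^ α ∂μ ≤ M ^ α * μ.real Set.univ := by
  calc ∫ x, f x ^ α ∂μ ≤ ∫ _, M ^ α ∂μ :=
        integral_mono_of_nonneg (.of_forall fun x => Real.rpow_nonneg (hf x) α)
          (integrable_const _) (hfM.mono fun x hx => Real.rpow_le_rpow (hf x) hx hα)
    _ = M ^ α * μ.real Set.univ := by rw [integral_const, smul_eq_mul, mul_comm]

theorem tendsto_log_integral_rpow_div_sub_one [IsFiniteMeasure μ] [NeZero μ]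
    (hfm : AEMeasurable f μ) (hf : 0 ≤ f) (hbdd : IsBoundedUnder (· ≤ ·) (ae μ) f) :
    Tendsto (fun α : ℝ => Real.log (∫ x, f x ^ α ∂μ) / (α - 1)) atTop
      (𝓝 (Real.log (essSup f μ))) := by
  set M := essSup f μ
  have hfM : ∀ᵐ x ∂μ, f x ≤ M := ae_le_essSup hbdd
  rcases le_or_gt M 0 with hM | hM
  -- then `f = 0` a.e., and both sides are `log 0 = 0`
  · have hf0 : f =ᵐ[μ] 0 := hfM.mono fun x hx => le_antisymm (hx.trans hM) (hf x)
    have hM0 : M = 0 := (essSup_congr_ae hf0).trans (essSup_const' 0)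
    rw [hM0, Real.log_zero]
    refine tendsto_const_nhds.congr' ?_
    filter_upwards [eventually_gt_atTop 0] with α hα
    have : (fun x => f x ^ α) =ᵐ[μ] 0 :=
      hf0.mono fun x hx => by simp [hx, Real.zero_rpow hα.ne']
    simp [integral_congr_ae this]
  have hmarkov : ∀ r, 0 ≤ r → ∀ α : ℝ, 0 < α →
      r ^ α * μ.real {x | r ≤ f x} ≤ ∫ x, f x ^ α ∂μ := fun r hr α hα =>
    rpow_mul_measureReal_le_integral_rpow hf (integrable_rpow_of_ae_le hfm hf hfM hα.le) hr hα
  refine tendsto_order.2 ⟨fun b hb => ?_, fun b hb => ?_⟩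
  · obtain ⟨c, hbc, hcM⟩ := exists_between hb
    set k := μ.real {x | Real.exp c ≤ f x}
    have hk : 0 < k :=
      measureReal_le_pos_of_lt_essSup hf ((Real.lt_log_iff_exp_lt hM).1 hcM)
    filter_upwards [(tendsto_mul_add_div_sub_one c (Real.log k)).eventually (lt_mem_nhds hbc),
      eventually_gt_atTop 1] with α hbα hα
    refine hbα.trans_le (div_le_div_of_nonneg_right ?_ (by linarith))
    calc α * c + Real.log k = Real.log (Real.exp c ^ α * k) := by
          rw [Real.log_mul (by positivity) hk.ne', Real.log_rpow (Real.exp_pos c),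
            Real.log_exp, mul_comm]
      _ ≤ Real.log (∫ x, f x ^ α ∂μ) :=
          Real.log_le_log (by positivity) (hmarkov _ (Real.exp_pos c).le α (by linarith))
  · filter_upwards [(tendsto_mul_add_div_sub_one (Real.log M)
      (Real.log (μ.real Set.univ))).eventually (gt_mem_nhds hb), eventually_gt_atTop 1]
      with α hbα hα
    have hpos : 0 < ∫ x, f x ^ α ∂μ := by
      have hk := measureReal_le_pos_of_lt_essSup hf (half_lt_self hM)
      exact lt_of_lt_of_le (by positivity) (hmarkov (M / 2) (by positivity) α (by linarith))
    refine lt_of_le_of_lt (div_le_div_of_nonneg_right ?_ (by linarith)) hbα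
    calc Real.log (∫ x, f x ^ α ∂μ) ≤ Real.log (M ^ α * μ.real Set.univ) :=
          Real.log_le_log hpos (integral_rpow_le_rpow_mul_measureReal_univ hf hfM (by linarith))
      _ = α * Real.log M + Real.log (μ.real Set.univ) := by
          rw [Real.log_mul (by positivity) measureReal_univ_pos.ne', Real.log_rpow hM]

end MeasureTheory

theorem renyi_limit_esssup_general {Ω : Type*} [MeasurableSpace Ω] (p q : Measure Ω)
    [IsProbabilityMeasure q]
    (C : ℝ) (hbound : ∀ᵐ x ∂q, (p.rnDeriv q x).toReal ≤ C) :
    Tendsto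
      (fun α : ℝ =>
        α * ((1 / (α * (α - 1))) * Real.log (∫ x, ((p.rnDeriv q x).toReal) ^ α ∂q)))
      atTop (𝓝 (Real.log (essSup (fun x => (p.rnDeriv q x).toReal) q))) := by
  refine (tendsto_log_integral_rpow_div_sub_one
    (Measure.measurable_rnDeriv p q).ennreal_toReal.aemeasurable
    (fun _ => ENNReal.toReal_nonneg) ⟨C, hbound⟩).congr' ?_
  filter_upwards [eventually_gt_atTop 1] with α hα
  have hα0 : α ≠ 0 := by positivity
  have hα1 : α - 1 ≠ 0 := sub_ne_zero.2 hα.ne'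
  field_simp

/-- If the density ratio `dp/dq` is essentially bounded, then
`α R_α(p‖q) → log (esssup_q dp/dq)` as `α → ∞`, where
`R_α(p‖q) = (1/(α(α−1))) log E_q[(dp/dq)^α]`. -/
theorem renyi_limit_esssup {Ω : Type*} [MeasurableSpace Ω] (p q : Measure Ω)
    [IsProbabilityMeasure p] [IsProbabilityMeasure q] (hpq : p ≪ q) (hqp : q ≪ p)
    (C : ℝ) (hbound : ∀ᵐ x ∂q, (p.rnDeriv q x).toReal ≤ C) :
    Tendsto
      (fun α : ℝ =>
        α * ((1 / (α * (α - 1))) * Real.log (∫ x, ((p.rnDeriv q x).toReal) ^ α ∂q)))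
      atTop (𝓝 (Real.log (essSup (fun x => (p.rnDeriv q x).toReal) q))) :=
  renyi_limit_esssup_general p q C hbound
end
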